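/- Let q be a power of an odd prime and let G = 1 + 𝔤 be a pattern subgroup of UT_n(F_{q^k}), regarded over F_q, with † an involutive F_q-algebra antiautomorphism of 𝔤 satisfying (α e_ij)† ∈ F_{q^k}^× e_{j̄ ī} for all α ∈ F_{q^k}^×. Let 𝔥 = {x ∈ 𝔤 | x_ij = 0 if j ≤ n/2}, and for λ ∈ 𝔤* let 𝔤_λ = {x ∈ 𝔤 | λ(yx) = 0 for all y ∈ 𝔥 and λ(xy) = 0 for all y ∈ 𝔥†} and G_λ = 1 + 𝔤_λ. Let f be a Springer morphism. Then (a) the map G_λ → ℂ^×, g ↦ θ(λ(f(g))), is a group homomorphism (a linear character of G_λ); and (b) this map is independent of the choice of Springer morphism: for any two Springer morphisms f and f′, θ(λ(f(g))) = θ(λ(f′(g))) for all g ∈ G_λ. -/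

import Mathlib

open Matrix

section PatternGroups

variable (F : Type) [Field F] (E : Type) [Field E] [Algebra F E] {n : ℕ}

/-- The pattern subalgebra `𝔤 ⊆ 𝔲𝔱_n(E)` of matrices supported on the set `S` of strict
relations `i ≺ j` of a subposet of the usual linear order on `[n]`. -/
def patAlg (S : Set (Fin n × Fin n)) : Set (Matrix (Fin n) (Fin n) E) :=
  {x | ∀ i j : Fin n, (i, j) ∉ S → x i j = 0}

/-- The pattern subgroup `G = 1 + 𝔤`. -/
def patGrp (S : Set (Fin n × Fin n)) : Set (Matrix (Fin n) (Fin n) E) :=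
  {g | ∃ x ∈ patAlg E S, g = 1 + x}

/-- The two-sided ideal `𝔥 = {x ∈ 𝔤 | x_{ij} = 0 if j ≤ n/2}` (indices read 1-based). -/
def patHAlg (S : Set (Fin n × Fin n)) : Set (Matrix (Fin n) (Fin n) E) :=
  {x | x ∈ patAlg E S ∧ ∀ i j : Fin n, (j : ℕ) + 1 ≤ n / 2 → x i j = 0}

/-- The normal subgroup `H = 1 + 𝔥` of `G`. -/
def patHGrp (S : Set (Fin n × Fin n)) : Set (Matrix (Fin n) (Fin n) E) :=
  {g | ∃ x ∈ patHAlg E S, g = 1 + x}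

/-- The extension of `†` from `𝔤` to `G = 1 + 𝔤`: `(1+x)† = 1 + x†`. -/
def dagGrp (dag : Matrix (Fin n) (Fin n) E → Matrix (Fin n) (Fin n) E)
    (g : Matrix (Fin n) (Fin n) E) : Matrix (Fin n) (Fin n) E :=
  1 + dag (g - 1)

/-- The subgroup `U = {u ∈ G | u† = u⁻¹}` of the pattern group `G`. -/
def patUGrp (S : Set (Fin n × Fin n))
    (dag : Matrix (Fin n) (Fin n) E → Matrix (Fin n) (Fin n) E) :
    Set (Matrix (Fin n) (Fin n) E) :=
  {u | u ∈ patGrp E S ∧ u * dagGrp E dag u = 1 ∧ dagGrp E dag u * u = 1}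

/-- The set `𝔲 = {x ∈ 𝔤 | x† = -x}`. -/
def patUAlg (S : Set (Fin n × Fin n))
    (dag : Matrix (Fin n) (Fin n) E → Matrix (Fin n) (Fin n) E) :
    Set (Matrix (Fin n) (Fin n) E) :=
  {x | x ∈ patAlg E S ∧ dag x = -x}

/-- `†` is an involutive `F`-algebra antiautomorphism of the pattern algebra `𝔤` sending
each `α e_{ij}` (`α ∈ E^×`) into `E^× e_{\bar j \bar i}`, where `\bar i = n + 1 - i`. -/
structure IsPatternAntiInvolution (S : Set (Fin n × Fin n))
    (dag : Matrix (Fin n) (Fin n) E → Matrix (Fin n) (Fin n) E) : Prop where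
  map_mem : ∀ x ∈ patAlg E S, dag x ∈ patAlg E S
  map_add : ∀ x ∈ patAlg E S, ∀ y ∈ patAlg E S, dag (x + y) = dag x + dag y
  map_smul : ∀ (c : F), ∀ x ∈ patAlg E S,
    dag (algebraMap F E c • x) = algebraMap F E c • dag x
  map_mul : ∀ x ∈ patAlg E S, ∀ y ∈ patAlg E S, dag (x * y) = dag y * dag x
  invol : ∀ x ∈ patAlg E S, dag (dag x) = x
  elementary : ∀ i j : Fin n, (i, j) ∈ S → ∀ α : E, α ≠ 0 →
    ∃ β : E, β ≠ 0 ∧ dag (Matrix.single i j α) = Matrix.single j.rev i.rev β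

/-- A Springer morphism: a bijection `f : G → 𝔤` with `f(U) = 𝔲` and
`f(1+x) = x + Σ_{i ≥ 2} a_i x^i` with coefficients `a_i ∈ F`. -/
def IsSpringerMorphism (S : Set (Fin n × Fin n))
    (dag f : Matrix (Fin n) (Fin n) E → Matrix (Fin n) (Fin n) E) : Prop :=
  Set.BijOn f (patGrp E S) (patAlg E S) ∧
  f '' patUGrp E S dag = patUAlg E S dag ∧
  ∃ (N : ℕ) (a : ℕ → F), a 1 = 1 ∧
    ∀ x ∈ patAlg E S, f (1 + x) = ∑ i ∈ Finset.Ico 1 N, algebraMap F E (a i) • x ^ i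

/-- The orbit `G · w = {g w g† | g ∈ G}` of `w` under the action `g · x = g x g†`. -/
def patGrpDot (S : Set (Fin n × Fin n))
    (dag : Matrix (Fin n) (Fin n) E → Matrix (Fin n) (Fin n) E)
    (w : Matrix (Fin n) (Fin n) E) : Set (Matrix (Fin n) (Fin n) E) :=
  {z | ∃ g ∈ patGrp E S, z = g * w * dagGrp E dag g}

end PatternGroups

section Supercharacters

variable (F : Type) [Field F] (E : Type) [Field E] [Algebra F E] {n : ℕ}

/-- The orbit of `λ ∈ 𝔲*` under a subset `T ⊆ G` (for `T = G` or `T = H`), acting by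
`(g·λ)(x) = λ(g⁻¹ · x) = λ(g⁻¹ x (g⁻¹)†)`.  An element `λ ∈ 𝔲*` is recorded as a function
`𝔲 → F` (here represented via a functional `lam` on the full matrix space: only its values
on `𝔲` matter). -/
def patDualOrbit (S : Set (Fin n × Fin n))
    (dag : Matrix (Fin n) (Fin n) E → Matrix (Fin n) (Fin n) E)
    (T : Set (Matrix (Fin n) (Fin n) E))
    (lam : Module.Dual F (Matrix (Fin n) (Fin n) E)) :
    Set (↥(patUAlg E S dag) → F) :=
  {ψ | ∃ g ∈ T, ∀ x : ↥(patUAlg E S dag),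
    ψ x = lam (g⁻¹ * (x : Matrix (Fin n) (Fin n) E) * dagGrp E dag g⁻¹)}

/-- The supercharacter `χ_λ = (|H·λ|/|G·λ|) Σ_{μ ∈ G·λ} θ ∘ μ ∘ f` of `U`, for `λ ∈ 𝔲*`. -/
noncomputable def patSupchar (S : Set (Fin n × Fin n))
    (dag f : Matrix (Fin n) (Fin n) E → Matrix (Fin n) (Fin n) E)
    (θ : AddChar F ℂ) (lam : Module.Dual F (Matrix (Fin n) (Fin n) E))
    (u : Matrix (Fin n) (Fin n) E) : ℂ :=
  (Nat.card (patDualOrbit F E S dag (patHGrp E S) lam) : ℂ) /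
    (Nat.card (patDualOrbit F E S dag (patGrp E S) lam) : ℂ) *
    ∑ᶠ ψ ∈ patDualOrbit F E S dag (patGrp E S) lam,
      @dite ℂ (f u ∈ patUAlg E S dag) (Classical.propDecidable _)
        (fun h => θ (ψ ⟨f u, h⟩)) (fun _ => 0)

/-- The superclass `K_u = {v ∈ U | f(v) ∈ G · f(u)}` of `u`, as a subset of the ambient
matrix space. -/
def patSupclass (S : Set (Fin n × Fin n))
    (dag f : Matrix (Fin n) (Fin n) E → Matrix (Fin n) (Fin n) E)
    (u : Matrix (Fin n) (Fin n) E) : Set (Matrix (Fin n) (Fin n) E) :=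
  {v | v ∈ patUGrp E S dag ∧ f v ∈ patGrpDot E S dag (f u)}

end Supercharacters

/-! For `x, z ∈ 𝔤_λ` one has `λ(xz) = 0`. Insert `1 = P + Q` between them, where `P` is the
diagonal projection onto the coordinates `≥ n/2`: then `xP ∈ 𝔥`, and `(Qz)† ∈ 𝔥` because `†`
moves row `i` to column `ī`, so `λ(xP · z)` and `λ(x · Qz)` vanish by the two conditions defining
`𝔤_λ`. Since `𝔤_λ` is closed under products, `λ(x^i) = 0` for `i ≥ 2`, hence
`λ(f(1 + x)) = λ(x)` for every Springer morphism `f`. So `θ ∘ λ ∘ f` does not depend on `f`, and it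
is multiplicative because `(1 + x)(1 + z) = 1 + (x + z + xz)`. -/

section PatternAlgebra

variable {E : Type} [Field E] {n : ℕ} {S : Set (Fin n × Fin n)}

variable (E S) in
def patSubmodule : Submodule E (Matrix (Fin n) (Fin n) E) where
  carrier := patAlg E S
  zero_mem' _ _ _ := rfl
  add_mem' {x y} hx hy i j h := by simp [hx i j h, hy i j h]
  smul_mem' c x hx i j h := by simp [hx i j h]

variable (E S) in
def patHSubmodule : Submodule E (Matrix (Fin n) (Fin n) E) where
  carrier := patHAlg E S
  zero_mem' := ⟨(patSubmodule E S).zero_mem, fun _ _ _ => rfl⟩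
  add_mem' {x y} hx hy := ⟨(patSubmodule E S).add_mem hx.1 hy.1,
    fun i j h => by simp [hx.2 i j h, hy.2 i j h]⟩
  smul_mem' c x hx := ⟨(patSubmodule E S).smul_mem c hx.1, fun i j h => by simp [hx.2 i j h]⟩

theorem single_mem_patAlg {i j : Fin n} {c : E} (h : c ≠ 0 → (i, j) ∈ S) :
    Matrix.single i j c ∈ patAlg E S := by
  intro i' j' h'
  by_cases hc : c = 0
  · simp [hc]
  · rw [single_apply_of_ne]
    rintro ⟨rfl, rfl⟩
    exact h' (h hc)

theorem mul_mem_patAlg (hS2 : ∀ i j k : Fin n, (i, j) ∈ S → (j, k) ∈ S → (i, k) ∈ S)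
    {x y : Matrix (Fin n) (Fin n) E} (hx : x ∈ patAlg E S) (hy : y ∈ patAlg E S) :
    x * y ∈ patAlg E S := by
  intro i k h
  rw [mul_apply]
  refine Finset.sum_eq_zero fun j _ => ?_
  by_cases hij : (i, j) ∈ S
  · have hjk : (j, k) ∉ S := fun hjk => h (hS2 i j k hij hjk)
    simp [hy j k hjk]
  · simp [hx i j hij]

theorem mul_mem_patHAlg (hS1 : ∀ p ∈ S, p.1 < p.2)
    (hS2 : ∀ i j k : Fin n, (i, j) ∈ S → (j, k) ∈ S → (i, k) ∈ S)
    {y z : Matrix (Fin n) (Fin n) E} (hy : y ∈ patHAlg E S) (hz : z ∈ patAlg E S) :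
    y * z ∈ patHAlg E S := by
  refine ⟨mul_mem_patAlg hS2 hy.1 hz, fun i k hk => ?_⟩
  rw [mul_apply]
  refine Finset.sum_eq_zero fun j _ => ?_
  by_cases hjk : (j, k) ∈ S
  · have hj : (j : ℕ) + 1 ≤ n / 2 := by have := hS1 (j, k) hjk; simp only at this; omega
    simp [hy.2 i j hj]
  · simp [hz j k hjk]

theorem mul_diagonal_mem_patHAlg {x : Matrix (Fin n) (Fin n) E} (hx : x ∈ patAlg E S)
    {d : Fin n → E} (hd : ∀ j : Fin n, (j : ℕ) + 1 ≤ n / 2 → d j = 0) :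
    x * diagonal d ∈ patHAlg E S :=
  ⟨fun i j h => by simp [hx i j h], fun i j h => by simp [hd j h]⟩

theorem diagonal_mul_mem_patAlg {x : Matrix (Fin n) (Fin n) E} (hx : x ∈ patAlg E S)
    (d : Fin n → E) : diagonal d * x ∈ patAlg E S :=
  fun i j h => by simp [hx i j h]

end PatternAlgebra

namespace IsPatternAntiInvolution

variable {F : Type} [Field F] {E : Type} [Field E] [Algebra F E] {n : ℕ}
  {S : Set (Fin n × Fin n)} {dag : Matrix (Fin n) (Fin n) E → Matrix (Fin n) (Fin n) E}

theorem map_zero (hdag : IsPatternAntiInvolution F E S dag) : dag 0 = 0 := by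
  have h := hdag.map_add 0 (patSubmodule E S).zero_mem 0 (patSubmodule E S).zero_mem
  rwa [add_zero, left_eq_add] at h

theorem map_sum (hdag : IsPatternAntiInvolution F E S dag) {ι : Type*} (s : Finset ι)
    {x : ι → Matrix (Fin n) (Fin n) E} (hx : ∀ i ∈ s, x i ∈ patAlg E S) :
    dag (∑ i ∈ s, x i) = ∑ i ∈ s, dag (x i) := by
  classical
  induction s using Finset.induction_on with
  | empty => simpa using hdag.map_zero
  | insert a s ha ih =>
    have hs : ∀ i ∈ s, x i ∈ patAlg E S := fun i hi => hx i (Finset.mem_insert_of_mem hi)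
    rw [Finset.sum_insert ha, Finset.sum_insert ha, ← ih hs,
      hdag.map_add _ (hx a (Finset.mem_insert_self a s)) _ ((patSubmodule E S).sum_mem hs)]

/-- `†` sends `e_ij` to a multiple of `e_{j̄ ī}`, so a row `i < n/2` becomes a column `ī` outside
the first `n/2`. -/
theorem map_mem_patHAlg (hdag : IsPatternAntiInvolution F E S dag)
    {x : Matrix (Fin n) (Fin n) E} (hx : x ∈ patAlg E S)
    (hrow : ∀ i j : Fin n, n / 2 ≤ (i : ℕ) → x i j = 0) : dag x ∈ patHAlg E S := by
  have hsingle (i j : Fin n) : single i j (x i j) ∈ patAlg E S :=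
    single_mem_patAlg fun hij => by_contra fun hS => hij (hx i j hS)
  rw [matrix_eq_sum_single x, hdag.map_sum _ fun i _ => (patSubmodule E S).sum_mem
    fun j _ => hsingle i j]
  refine (patHSubmodule E S).sum_mem fun i _ => ?_
  rw [hdag.map_sum _ fun j _ => hsingle i j]
  refine (patHSubmodule E S).sum_mem fun j _ => ?_
  by_cases hij : x i j = 0
  · rw [hij, single_zero, hdag.map_zero]
    exact (patHSubmodule E S).zero_mem
  obtain ⟨β, -, hβ⟩ := hdag.elementary i j (by_contra fun hS => hij (hx i j hS)) (x i j) hij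
  have hi : (i : ℕ) < n / 2 := by_contra fun h => hij (hrow i j (not_lt.mp h))
  refine ⟨hdag.map_mem _ (hsingle i j), fun i' j' hj' => ?_⟩
  rw [hβ, single_apply_of_col_ne _ _ (fun h => by rw [← h, Fin.val_rev] at hj'; omega)]

end IsPatternAntiInvolution

section LambdaAlgebra

variable {F : Type} [Field F] {E : Type} [Field E] [Algebra F E] {n : ℕ}
  {S : Set (Fin n × Fin n)} {dag : Matrix (Fin n) (Fin n) E → Matrix (Fin n) (Fin n) E}
  {lam : Module.Dual F (Matrix (Fin n) (Fin n) E)}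

variable (S dag lam) in
/-- `𝔤_λ`, so that `G_λ = 1 + 𝔤_λ`. -/
def patLamAlg : Set (Matrix (Fin n) (Fin n) E) :=
  {x | x ∈ patAlg E S ∧ (∀ y ∈ patHAlg E S, lam (y * x) = 0) ∧
    (∀ y ∈ patHAlg E S, lam (x * dag y) = 0)}

theorem lam_mul_eq_zero (hdag : IsPatternAntiInvolution F E S dag)
    {x z : Matrix (Fin n) (Fin n) E}
    (hx : x ∈ patAlg E S) (hx₂ : ∀ y ∈ patHAlg E S, lam (x * dag y) = 0)
    (hz : z ∈ patAlg E S) (hz₁ : ∀ y ∈ patHAlg E S, lam (y * z) = 0) :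
    lam (x * z) = 0 := by
  set d : Fin n → E := fun j => if n / 2 ≤ (j : ℕ) then 1 else 0
  have hsplit : x * z = x * diagonal d * z + x * (diagonal (1 - d) * z) := by
    have hd : diagonal d + diagonal (1 - d) = 1 := by rw [diagonal_add]; simp
    rw [mul_assoc, ← mul_add, ← add_mul, hd, one_mul]
  have hleft : x * diagonal d ∈ patHAlg E S :=
    mul_diagonal_mem_patHAlg hx fun j hj => if_neg (by omega)
  have hright : dag (diagonal (1 - d) * z) ∈ patHAlg E S :=
    hdag.map_mem_patHAlg (diagonal_mul_mem_patAlg hz _) fun i j hi => by simp [d, hi]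
  have hright' := hx₂ _ hright
  rw [hdag.invol _ (diagonal_mul_mem_patAlg hz _)] at hright'
  rw [hsplit, map_add, hz₁ _ hleft, hright', add_zero]

theorem add_mem_patLamAlg {x z : Matrix (Fin n) (Fin n) E}
    (hx : x ∈ patLamAlg S dag lam) (hz : z ∈ patLamAlg S dag lam) :
    x + z ∈ patLamAlg S dag lam :=
  ⟨(patSubmodule E S).add_mem hx.1 hz.1,
    fun y hy => by rw [mul_add, map_add, hx.2.1 y hy, hz.2.1 y hy, add_zero],
    fun y hy => by rw [add_mul, map_add, hx.2.2 y hy, hz.2.2 y hy, add_zero]⟩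

theorem mul_mem_patLamAlg (hS1 : ∀ p ∈ S, p.1 < p.2)
    (hS2 : ∀ i j k : Fin n, (i, j) ∈ S → (j, k) ∈ S → (i, k) ∈ S)
    (hdag : IsPatternAntiInvolution F E S dag) {x z : Matrix (Fin n) (Fin n) E}
    (hx : x ∈ patLamAlg S dag lam) (hz : z ∈ patLamAlg S dag lam) :
    x * z ∈ patLamAlg S dag lam := by
  refine ⟨mul_mem_patAlg hS2 hx.1 hz.1, fun y hy => ?_, fun y hy => ?_⟩
  · rw [← mul_assoc]
    exact hz.2.1 _ (mul_mem_patHAlg hS1 hS2 hy hx.1)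
  · have h := hx.2.2 _ (mul_mem_patHAlg hS1 hS2 hy (hdag.map_mem z hz.1))
    rwa [hdag.map_mul _ hy.1 _ (hdag.map_mem z hz.1), hdag.invol z hz.1, ← mul_assoc] at h

theorem pow_succ_mem_patLamAlg (hS1 : ∀ p ∈ S, p.1 < p.2)
    (hS2 : ∀ i j k : Fin n, (i, j) ∈ S → (j, k) ∈ S → (i, k) ∈ S)
    (hdag : IsPatternAntiInvolution F E S dag) {x : Matrix (Fin n) (Fin n) E}
    (hx : x ∈ patLamAlg S dag lam) (i : ℕ) : x ^ (i + 1) ∈ patLamAlg S dag lam := by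
  induction i with
  | zero => rwa [pow_one]
  | succ i ih => rw [pow_succ]; exact mul_mem_patLamAlg hS1 hS2 hdag ih hx

theorem lam_pow_eq_zero (hS1 : ∀ p ∈ S, p.1 < p.2)
    (hS2 : ∀ i j k : Fin n, (i, j) ∈ S → (j, k) ∈ S → (i, k) ∈ S)
    (hdag : IsPatternAntiInvolution F E S dag) {x : Matrix (Fin n) (Fin n) E}
    (hx : x ∈ patLamAlg S dag lam) {i : ℕ} (hi : 2 ≤ i) : lam (x ^ i) = 0 := by
  obtain ⟨i, rfl⟩ := Nat.exists_eq_add_of_le' hi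
  have hpow := pow_succ_mem_patLamAlg hS1 hS2 hdag hx i
  rw [pow_succ']
  exact lam_mul_eq_zero hdag hx.1 hx.2.2 hpow.1 hpow.2.1

/-- Only the linear term of `f(1 + x) = x + Σ_{i ≥ 2} a_i x^i` survives under `λ`; when the series
is empty, `f` vanishes on `G` and injectivity forces `x = 0`. -/
theorem IsSpringerMorphism.lam_apply_one_add (hS1 : ∀ p ∈ S, p.1 < p.2)
    (hS2 : ∀ i j k : Fin n, (i, j) ∈ S → (j, k) ∈ S → (i, k) ∈ S)
    (hdag : IsPatternAntiInvolution F E S dag)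
    {f : Matrix (Fin n) (Fin n) E → Matrix (Fin n) (Fin n) E}
    (hf : IsSpringerMorphism F E S dag f) {x : Matrix (Fin n) (Fin n) E}
    (hx : x ∈ patLamAlg S dag lam) : lam (f (1 + x)) = lam x := by
  obtain ⟨hbij, -, N, a, ha₁, hseries⟩ := hf
  rw [hseries x hx.1, map_sum]
  refine (Finset.sum_eq_single 1 (fun i hi hi₁ => ?_) fun h₁ => ?_).trans (by simp [ha₁])
  · rw [algebraMap_smul, map_smul, lam_pow_eq_zero hS1 hS2 hdag hx
      (by rw [Finset.mem_Ico] at hi; omega), smul_zero]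
  · have hempty : Finset.Ico 1 N = ∅ := by
      rw [Finset.Ico_eq_empty_iff]; rw [Finset.mem_Ico] at h₁; omega
    have hx₀ : 1 + x = 1 + 0 := hbij.injOn ⟨x, hx.1, rfl⟩ ⟨0, (patSubmodule E S).zero_mem, rfl⟩
      (by rw [hseries x hx.1, hseries 0 (patSubmodule E S).zero_mem, hempty, Finset.sum_empty,
        Finset.sum_empty])
    simp [add_left_cancel hx₀]

end LambdaAlgebra

theorem G_lambda_linear_character_and_independence_general
    (F : Type) [Field F] (E : Type) [Field E] [Algebra F E]
    {n : ℕ} (S : Set (Fin n × Fin n))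
    (hS1 : ∀ p ∈ S, p.1 < p.2)
    (hS2 : ∀ i j k : Fin n, (i, j) ∈ S → (j, k) ∈ S → (i, k) ∈ S)
    (dag : Matrix (Fin n) (Fin n) E → Matrix (Fin n) (Fin n) E)
    (hdag : IsPatternAntiInvolution F E S dag)
    (θ : AddChar F ℂ)
    (lam : Module.Dual F (Matrix (Fin n) (Fin n) E)) :
    -- (a): G_λ is closed under multiplication and g ↦ θ(λ(f g)) is multiplicative on G_λ
    (∀ f : Matrix (Fin n) (Fin n) E → Matrix (Fin n) (Fin n) E,
      IsSpringerMorphism F E S dag f →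
      ∀ g ∈ {g | ∃ x ∈ patAlg E S, g = 1 + x ∧
          (∀ y ∈ patHAlg E S, lam (y * x) = 0) ∧
          (∀ y ∈ patHAlg E S, lam (x * dag y) = 0)},
      ∀ h ∈ {g | ∃ x ∈ patAlg E S, g = 1 + x ∧
          (∀ y ∈ patHAlg E S, lam (y * x) = 0) ∧
          (∀ y ∈ patHAlg E S, lam (x * dag y) = 0)},
        g * h ∈ {g | ∃ x ∈ patAlg E S, g = 1 + x ∧
          (∀ y ∈ patHAlg E S, lam (y * x) = 0) ∧
          (∀ y ∈ patHAlg E S, lam (x * dag y) = 0)} ∧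
        θ (lam (f (g * h))) = θ (lam (f g)) * θ (lam (f h))) ∧
    -- (b): independence of the Springer morphism
    (∀ f f' : Matrix (Fin n) (Fin n) E → Matrix (Fin n) (Fin n) E,
      IsSpringerMorphism F E S dag f → IsSpringerMorphism F E S dag f' →
      ∀ g ∈ {g | ∃ x ∈ patAlg E S, g = 1 + x ∧
          (∀ y ∈ patHAlg E S, lam (y * x) = 0) ∧
          (∀ y ∈ patHAlg E S, lam (x * dag y) = 0)},
        θ (lam (f g)) = θ (lam (f' g))) := by
  refine ⟨fun f hf g hg h hh => ?_, fun f f' hf hf' g hg => ?_⟩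
  · obtain ⟨x, hx, rfl, hxc⟩ := hg
    obtain ⟨z, hz, rfl, hzc⟩ := hh
    have hxL : x ∈ patLamAlg S dag lam := ⟨hx, hxc⟩
    have hzL : z ∈ patLamAlg S dag lam := ⟨hz, hzc⟩
    have hprod : (1 + x) * (1 + z) = 1 + (x + z + x * z) := by noncomm_ring
    have hw : x + z + x * z ∈ patLamAlg S dag lam :=
      add_mem_patLamAlg (add_mem_patLamAlg hxL hzL) (mul_mem_patLamAlg hS1 hS2 hdag hxL hzL)
    refine ⟨⟨_, hw.1, hprod, hw.2⟩, ?_⟩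
    rw [hprod, hf.lam_apply_one_add hS1 hS2 hdag hw, hf.lam_apply_one_add hS1 hS2 hdag hxL,
      hf.lam_apply_one_add hS1 hS2 hdag hzL, map_add lam, map_add lam,
      lam_mul_eq_zero hdag hx hxc.2 hz hzc.1, add_zero, AddChar.map_add_eq_mul]
  · obtain ⟨x, hx, rfl, hxc⟩ := hg
    rw [hf.lam_apply_one_add hS1 hS2 hdag ⟨hx, hxc⟩, hf'.lam_apply_one_add hS1 hS2 hdag ⟨hx, hxc⟩]

/-- With `G = 1 + 𝔤` a pattern subgroup, `†` an anti-involution as above,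
`𝔥 = {x ∈ 𝔤 | x_ij = 0 if j ≤ n/2}`, and for `λ ∈ 𝔤*` the algebra subgroup
`G_λ = 1 + 𝔤_λ` where `𝔤_λ = {x ∈ 𝔤 | λ(yx) = 0 ∀ y ∈ 𝔥, λ(xy) = 0 ∀ y ∈ 𝔥†}`:
(a) `G_λ` is closed under multiplication and `g ↦ θ(λ(f(g)))` is a group homomorphism
`G_λ → ℂ^×` (a linear character of `G_λ`), for any Springer morphism `f`; and
(b) this character is independent of the choice of Springer morphism. -/
theorem G_lambda_linear_character_and_independence
    (F : Type) [Field F] [Fintype F] (E : Type) [Field E] [Fintype E] [Algebra F E]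
    (hodd : ringChar F ≠ 2)
    {n : ℕ} (S : Set (Fin n × Fin n))
    (hS1 : ∀ p ∈ S, p.1 < p.2)
    (hS2 : ∀ i j k : Fin n, (i, j) ∈ S → (j, k) ∈ S → (i, k) ∈ S)
    (dag : Matrix (Fin n) (Fin n) E → Matrix (Fin n) (Fin n) E)
    (hdag : IsPatternAntiInvolution F E S dag)
    (θ : AddChar F ℂ) (hθ : ∃ a : F, θ a ≠ 1)
    (lam : Module.Dual F (Matrix (Fin n) (Fin n) E)) :
    -- (a): G_λ is closed under multiplication and g ↦ θ(λ(f g)) is multiplicative on G_λ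
    (∀ f : Matrix (Fin n) (Fin n) E → Matrix (Fin n) (Fin n) E,
      IsSpringerMorphism F E S dag f →
      ∀ g ∈ {g | ∃ x ∈ patAlg E S, g = 1 + x ∧
          (∀ y ∈ patHAlg E S, lam (y * x) = 0) ∧
          (∀ y ∈ patHAlg E S, lam (x * dag y) = 0)},
      ∀ h ∈ {g | ∃ x ∈ patAlg E S, g = 1 + x ∧
          (∀ y ∈ patHAlg E S, lam (y * x) = 0) ∧
          (∀ y ∈ patHAlg E S, lam (x * dag y) = 0)},
        g * h ∈ {g | ∃ x ∈ patAlg E S, g = 1 + x ∧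
          (∀ y ∈ patHAlg E S, lam (y * x) = 0) ∧
          (∀ y ∈ patHAlg E S, lam (x * dag y) = 0)} ∧
        θ (lam (f (g * h))) = θ (lam (f g)) * θ (lam (f h))) ∧
    -- (b): independence of the Springer morphism
    (∀ f f' : Matrix (Fin n) (Fin n) E → Matrix (Fin n) (Fin n) E,
      IsSpringerMorphism F E S dag f → IsSpringerMorphism F E S dag f' →
      ∀ g ∈ {g | ∃ x ∈ patAlg E S, g = 1 + x ∧
          (∀ y ∈ patHAlg E S, lam (y * x) = 0) ∧
          (∀ y ∈ patHAlg E S, lam (x * dag y) = 0)},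
        θ (lam (f g)) = θ (lam (f' g))) :=
  G_lambda_linear_character_and_independence_general F E S hS1 hS2 dag hdag θ lam
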